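/- Upper bound via block count: for every natural number k ≥ 1, α(k) ≤ bl(k) + 1, where α(k) is the minimum size of a family of finite sets whose generated ideal has exactly k elements, and bl(k) is the binary block count of k. -/

import Mathlib

/-- The ideal generated by a finite family of finite sets: the union of their power sets. -/
def idealOf (𝒮 : Finset (Finset ℕ)) : Finset (Finset ℕ) :=
  𝒮.sup Finset.powerset

/-- `alpha n` is the minimum size of a family of finite sets whose generated ideal
has exactly `n` elements. -/
noncomputable def alpha (n : ℕ) : ℕ :=
  sInf {m | ∃ 𝒮 : Finset (Finset ℕ), 𝒮.card = m ∧ (idealOf 𝒮).card = n}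

/-- The block count of `k`: the number of maximal blocks of consecutive `1`s in
the binary representation of `k`. -/
def blockCount (k : ℕ) : ℕ :=
  ((Finset.range (k + 1)).filter fun i => k.testBit i ∧ ¬k.testBit (i + 1)).card

open Finset

/-! ### blockCount lemmas -/

lemma lt_of_testBit' {k i : ℕ} (h : k.testBit i = true) : i < k + 1 :=
  lt_of_lt_of_le (Nat.lt_two_pow_self (n := i)) (Nat.le_succ_of_le (Nat.ge_two_pow_of_testBit h))

lemma blockCount_eq (k N : ℕ) (h : k < N) :
    blockCount k = ((Finset.range N).filter fun i => k.testBit i ∧ ¬k.testBit (i + 1)).card := by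
  unfold blockCount
  congr 1
  ext i
  simp only [mem_filter, mem_range]
  constructor
  · rintro ⟨hi, hc⟩
    exact ⟨lt_of_lt_of_le (lt_of_testBit' hc.1) h, hc⟩
  · rintro ⟨hi, hc⟩
    exact ⟨lt_of_testBit' hc.1, hc⟩

lemma blockCount_zero : blockCount 0 = 0 := by
  simp [blockCount]

lemma blockCount_two_mul (k : ℕ) : blockCount (2 * k) = blockCount k := by
  rcases Nat.eq_zero_or_pos k with rfl | hk
  · simp
  rw [blockCount_eq (2 * k) (2 * k + 1) (Nat.lt_succ_self _),
      blockCount_eq k (2 * k) (by omega)]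
  rw [Finset.range_add_one', Finset.filter_insert]
  have h0 : ¬((2 * k).testBit 0 = true ∧ ¬(2 * k).testBit 1 = true) := by
    simp [Nat.testBit_zero, Nat.mul_mod_right]
  rw [if_neg h0, Finset.filter_map, Finset.card_map]
  congr 1
  apply Finset.filter_congr
  intro i _
  have h1 : (2 * k).testBit (i + 1) = k.testBit i := by
    rw [Nat.testBit_succ, Nat.mul_div_cancel_left _ (by norm_num)]
  have h2 : (2 * k).testBit (i + 2) = k.testBit (i + 1) := by
    rw [Nat.testBit_succ, Nat.mul_div_cancel_left _ (by norm_num)]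
  change ((2 * k).testBit (i + 1) = true ∧ ¬(2 * k).testBit (i + 1 + 1) = true) ↔ _
  simp [Function.comp, h1, h2]

lemma blockCount_odd (k : ℕ) :
    blockCount (2 * k + 1) = blockCount k + (if k % 2 = 0 then 1 else 0) := by
  rw [blockCount_eq (2 * k + 1) (2 * k + 1 + 1) (Nat.lt_succ_self _),
      blockCount_eq k (2 * k + 1) (by omega)]
  rw [Finset.range_add_one', Finset.filter_insert, Finset.filter_map]
  have hdiv : (2 * k + 1) / 2 = k := by omega
  have h0 : ((2 * k + 1).testBit 0 = true ∧ ¬(2 * k + 1).testBit (0 + 1) = true) ↔ k % 2 = 0 := by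
    rw [show (0:ℕ) + 1 = 0 + 1 from rfl, Nat.testBit_succ, hdiv]
    simp [Nat.testBit_zero]
  have h1 : ∀ i, (2 * k + 1).testBit (i + 1) = k.testBit i := by
    intro i; rw [Nat.testBit_succ, hdiv]
  have hfl : ∀ (f : ℕ ↪ ℕ), ⇑f = (fun i => i + 1) →
      Finset.filter ((fun i => (2 * k + 1).testBit i = true ∧ ¬(2 * k + 1).testBit (i + 1) = true) ∘ ⇑f) (Finset.range (2 * k + 1))
      = Finset.filter (fun i => k.testBit i = true ∧ ¬ k.testBit (i + 1) = true) (Finset.range (2 * k + 1)) := by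
    intro f hf
    apply Finset.filter_congr
    intro i _
    simp [Function.comp, hf, h1, show ∀ i, i + 1 + 1 = (i+1)+1 from fun _ => rfl]
  by_cases hk2 : k % 2 = 0
  · rw [if_pos (h0.mpr hk2), Finset.card_insert_of_notMem (by simp), Finset.card_map,
        hfl _ rfl, if_pos hk2]
  · rw [if_neg (fun h => hk2 (h0.mp h)), Finset.card_map, hfl _ rfl, if_neg hk2]
    simp

lemma blockCount_pow_mul (t q : ℕ) : blockCount (2 ^ t * q) = blockCount q := by
  induction t with
  | zero => simp
  | succ t ih =>
    have : 2 ^ (t + 1) * q = 2 * (2 ^ t * q) := by ring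
    rw [this, blockCount_two_mul, ih]

lemma blockCount_low (c q : ℕ) (hc : 1 ≤ c) :
    blockCount (2 ^ c - 1 + 2 ^ (c + 1) * q) = blockCount q + 1 := by
  induction c with
  | zero => omega
  | succ c ih =>
    rcases Nat.eq_zero_or_pos c with rfl | hc'
    · have h1 : 2 ^ 1 - 1 + 2 ^ (1 + 1) * q = 2 * (2 * q) + 1 := by norm_num; ring
      rw [h1, blockCount_odd, blockCount_two_mul]
      simp [Nat.mul_mod_right]
    · have e1 : (2:ℕ) ^ (c + 1) = 2 * 2 ^ c := by ring
      have eq1 : (2:ℕ) ^ (c + 1 + 1) * q = 2 * (2 ^ (c + 1) * q) := by ring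
      have eq2 : (2:ℕ) ^ (c + 1) * q = 2 * (2 ^ c * q) := by ring
      have h2 : (1:ℕ) ≤ 2 ^ c := Nat.one_le_two_pow
      have e0 : (2:ℕ) ^ c = 2 * 2 ^ (c - 1) := by
        rw [← pow_succ']
        congr 1
        omega
      have harith : 2 ^ (c + 1) - 1 + 2 ^ (c + 1 + 1) * q
          = 2 * (2 ^ c - 1 + 2 ^ (c + 1) * q) + 1 := by omega
      have hodd : (2 ^ c - 1 + 2 ^ (c + 1) * q) % 2 = 1 := by omega
      rw [harith, blockCount_odd, ih hc', if_neg (by omega)]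

lemma odd_decomp : ∀ k : ℕ, k % 2 = 1 → ∃ c q : ℕ, 1 ≤ c ∧ k = 2 ^ c - 1 + 2 ^ (c + 1) * q := by
  intro k
  induction k using Nat.strong_induction_on with
  | _ k ih =>
    intro hk
    have hk2 : k = 2 * (k / 2) + 1 := by omega
    rcases Nat.even_or_odd (k / 2) with he | ho
    · refine ⟨1, k / 2 / 2, le_refl 1, ?_⟩
      obtain ⟨d, hd⟩ := he
      norm_num
      omega
    · obtain ⟨c, q, hc, heq⟩ := ih (k / 2) (by omega) (Nat.odd_iff.mp ho)
      refine ⟨c + 1, q, by omega, ?_⟩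
      have e1 : (2:ℕ) ^ (c + 1) = 2 * 2 ^ c := by ring
      have eq1 : (2:ℕ) ^ (c + 1 + 1) * q = 2 * (2 ^ (c + 1) * q) := by ring
      have eq2 : (2:ℕ) ^ (c + 1) * q = 2 * (2 ^ c * q) := by ring
      have h2 : (1:ℕ) ≤ 2 ^ c := Nat.one_le_two_pow
      omega

/-! ### Construction lemmas -/

lemma mem_idealOf {𝒮 : Finset (Finset ℕ)} {B : Finset ℕ} :
    B ∈ idealOf 𝒮 ↔ ∃ S ∈ 𝒮, B ⊆ S := by
  simp [idealOf, Finset.mem_sup, Finset.mem_powerset]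

lemma empty_mem_idealOf {𝒮 : Finset (Finset ℕ)} (h : 𝒮.Nonempty) : ∅ ∈ idealOf 𝒮 := by
  obtain ⟨S, hS⟩ := h
  exact mem_idealOf.mpr ⟨S, hS, Finset.empty_subset S⟩

def Good (k m : ℕ) : Prop :=
  ∃ 𝒮 : Finset (Finset ℕ), 𝒮.Nonempty ∧ 𝒮.card ≤ m ∧ (idealOf 𝒮).card = k

lemma good_pow (c : ℕ) : Good (2 ^ c) 1 := by
  refine ⟨{Finset.range c}, Finset.singleton_nonempty _, by simp, ?_⟩
  simp [idealOf, Finset.card_powerset, Finset.card_range]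

lemma good_double {k m : ℕ} (h : Good k m) : Good (2 * k) m := by
  obtain ⟨𝒮, hne, hcard, hideal⟩ := h
  obtain ⟨x, hx⟩ := Infinite.exists_notMem_finset (𝒮.sup id)
  have hxS : ∀ S ∈ 𝒮, x ∉ S := by
    intro S hS hxS
    exact hx (Finset.le_sup (f := id) hS hxS)
  have hxI : ∀ B ∈ idealOf 𝒮, x ∉ B := by
    intro B hB hxB
    obtain ⟨S, hS, hBS⟩ := mem_idealOf.mp hB
    exact hxS S hS (hBS hxB)
  refine ⟨𝒮.image (insert x), hne.image _, le_trans (Finset.card_image_le) hcard, ?_⟩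
  have hid : idealOf (𝒮.image (insert x)) = idealOf 𝒮 ∪ (idealOf 𝒮).image (insert x) := by
    ext B
    simp only [Finset.mem_union, Finset.mem_image, mem_idealOf]
    constructor
    · rintro ⟨T, ⟨S, hS, rfl⟩, hBT⟩
      by_cases hxB : x ∈ B
      · refine Or.inr ⟨B.erase x, ⟨S, hS, ?_⟩, Finset.insert_erase hxB⟩
        exact Finset.subset_insert_iff.mp hBT
      · exact Or.inl ⟨S, hS, fun y hy => by
          rcases Finset.mem_insert.mp (hBT hy) with rfl | h
          · exact absurd hy hxB
          · exact h⟩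
    · rintro (⟨S, hS, hBS⟩ | ⟨C, hC, rfl⟩)
      · exact ⟨insert x S, ⟨S, hS, rfl⟩, hBS.trans (Finset.subset_insert x S)⟩
      · obtain ⟨S, hS, hCS⟩ := hC
        exact ⟨insert x S, ⟨S, hS, rfl⟩, Finset.insert_subset_insert x hCS⟩
  rw [hid, Finset.card_union_of_disjoint, hideal,
      Finset.card_image_of_injOn, hideal]
  · ring
  · intro A hA B hB hAB
    have hxA : x ∉ A := hxI A (by exact_mod_cast hA)
    have hxB : x ∉ B := hxI B (by exact_mod_cast hB)
    have := congrArg (fun s => Finset.erase s x) hAB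
    simpa [Finset.erase_insert, hxA, hxB] using this
  · rw [Finset.disjoint_left]
    intro B hB hB'
    obtain ⟨C, _, rfl⟩ := Finset.mem_image.mp hB'
    exact hxI _ hB (Finset.mem_insert_self x C)

lemma good_split {a m : ℕ} (h : Good a m) (c : ℕ) : Good (a + (2 ^ c - 1)) (m + 1) := by
  obtain ⟨𝒮, hne, hcard, hideal⟩ := h
  set N : ℕ := (𝒮.sup id).sup id + 1 with hN
  have hground : ∀ S ∈ 𝒮, ∀ y ∈ S, y < N := by
    intro S hS y hy
    have : y ≤ (𝒮.sup id).sup id :=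
      Finset.le_sup (f := id) (Finset.le_sup (f := id) hS hy)
    omega
  set A : Finset ℕ := (Finset.range c).image (fun i => N + i) with hA
  have hAcard : A.card = c := by
    rw [hA, Finset.card_image_of_injective _ (fun i j h => by omega), Finset.card_range]
  have hAN : ∀ y ∈ A, N ≤ y := by
    intro y hy
    obtain ⟨i, _, rfl⟩ := Finset.mem_image.mp hy
    omega
  refine ⟨insert A 𝒮, Finset.insert_nonempty _ _,
    le_trans (Finset.card_insert_le _ _) (by omega), ?_⟩
  have hid : idealOf (insert A 𝒮) = A.powerset ∪ idealOf 𝒮 := by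
    simp [idealOf, Finset.sup_insert]
  have hid2 : A.powerset ∪ idealOf 𝒮 = (A.powerset.erase ∅) ∪ idealOf 𝒮 := by
    ext B
    simp only [Finset.mem_union, Finset.mem_erase]
    constructor
    · rintro (hB | hB)
      · by_cases hBe : B = ∅
        · exact Or.inr (hBe ▸ empty_mem_idealOf hne)
        · exact Or.inl ⟨hBe, hB⟩
      · exact Or.inr hB
    · rintro (⟨_, hB⟩ | hB)
      · exact Or.inl hB
      · exact Or.inr hB
  have hdisj : Disjoint (A.powerset.erase ∅) (idealOf 𝒮) := by
    rw [Finset.disjoint_left]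
    rintro B hB hB'
    obtain ⟨hBne, hBA⟩ := Finset.mem_erase.mp hB
    obtain ⟨S, hS, hBS⟩ := mem_idealOf.mp hB'
    obtain ⟨y, hy⟩ := Finset.nonempty_iff_ne_empty.mpr hBne
    have h1 : N ≤ y := hAN y (Finset.mem_powerset.mp hBA hy)
    have h2 : y < N := hground S hS y (hBS hy)
    omega
  rw [hid, hid2, Finset.card_union_of_disjoint hdisj, hideal,
      Finset.card_erase_of_mem (Finset.empty_mem_powerset A),
      Finset.card_powerset, hAcard]
  omega

lemma good_main : ∀ k : ℕ, 1 ≤ k → Good k (blockCount k + 1) := by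
  intro k
  induction k using Nat.strong_induction_on with
  | _ k ih =>
    intro hk
    rcases Nat.even_or_odd k with he | ho
    · obtain ⟨d, hd⟩ := he
      have hdk : k = 2 * d := by omega
      have hd1 : 1 ≤ d := by omega
      have := good_double (ih d (by omega) hd1)
      rwa [hdk, blockCount_two_mul]
    · obtain ⟨c, q, hc, heq⟩ := odd_decomp k (Nat.odd_iff.mp ho)
      rcases Nat.eq_zero_or_pos q with rfl | hq
      · -- k = 2^c - 1
        have h2 : (1:ℕ) ≤ 2 ^ (c - 1) := Nat.one_le_two_pow
        have hsplit := good_split (good_pow (c - 1)) (c - 1)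
        have harith : 2 ^ (c - 1) + (2 ^ (c - 1) - 1) = k := by
          have e1 : (2:ℕ) ^ c = 2 * 2 ^ (c - 1) := by
            rw [← pow_succ']
            congr 1
            omega
          omega
        rw [harith] at hsplit
        have hbl : blockCount k = 1 := by
          rw [heq, blockCount_low c 0 hc, blockCount_zero]
        rw [hbl]
        exact hsplit
      · -- k = 2^c - 1 + 2^(c+1) * q, q ≥ 1
        have h2 : (2:ℕ) ≤ 2 ^ c := by
          calc (2:ℕ) = 2 ^ 1 := by norm_num
          _ ≤ 2 ^ c := Nat.pow_le_pow_right (by norm_num) hc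
        have h3 : (1:ℕ) ≤ 2 ^ (c + 1) := Nat.one_le_two_pow
        have ha1 : 1 ≤ 2 ^ (c + 1) * q := by
          calc 1 ≤ 2 ^ (c + 1) := h3
          _ ≤ 2 ^ (c + 1) * q := Nat.le_mul_of_pos_right _ hq
        have halt : 2 ^ (c + 1) * q < k := by omega
        have hgood := ih (2 ^ (c + 1) * q) halt ha1
        rw [blockCount_pow_mul] at hgood
        have hsplit := good_split hgood c
        have harith : 2 ^ (c + 1) * q + (2 ^ c - 1) = k := by omega
        rw [harith] at hsplit
        have hbl : blockCount k = blockCount q + 1 := by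
          rw [heq]; exact blockCount_low c q hc
        rw [hbl]
        exact hsplit

/-- Upper bound via block count: `alpha k ≤ bl k + 1`. -/
theorem alpha_le_blockCount_succ (k : ℕ) (hk : 1 ≤ k) :
    alpha k ≤ blockCount k + 1 := by
  obtain ⟨𝒮, _, hcard, hideal⟩ := good_main k hk
  exact le_trans (Nat.sInf_le ⟨𝒮, rfl, hideal⟩) hcard
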